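/- arXiv:1309.0998 — 5 statements merged into one kernel-verified Lean document; each statement's English description precedes it below -/
import Mathlib

section
/- Let B be a finite-dimensional algebra over k = F_q of global dimension at most 2, and let A1, A2 be finite-dimensional right B-modules with minimal projective resolutions 0 → P2 →(a2) P1 →(a1) P0 →(a0) A1 → 0 and 0 → Q2 →(b2) Q1 →(b1) Q0 →(b0) A2 → 0, and associated 2-periodic complexes C_{A1}, C_{A2}. Then: (i) every morphism of 2-periodic complexes C_{A1} → C_{A2}, written as a pair (h : P1 → Q1, matrix (a b; c d) : P0 ⊕ P2 → Q0 ⊕ Q2), satisfies c = 0, and the triple (d, h, a) is a chain map between the two resolutions, hence induces a unique B-module homomorphism f : A1 → A2; (ii) the resulting k-linear map φ : Hom_{C_2(mod B)}(C_{A1}, C_{A2}) → Hom_B(A1, A2) is surjective. -/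
open Function

/-- A submodule `N` of `M` is superfluous if `N ⊔ X = ⊤` implies `X = ⊤`
for every submodule `X`. -/
def Superfluous {B M : Type} [Ring B] [AddCommGroup M] [Module Bᵐᵒᵖ M]
    (N : Submodule Bᵐᵒᵖ M) : Prop :=
  ∀ X : Submodule Bᵐᵒᵖ M, N ⊔ X = ⊤ → X = ⊤

/-- The (right) global dimension of `B` is at most `n`: every right `B`-module admits
a projective resolution vanishing in degrees `> n`. -/
def GlobalDimLE (B : Type) [Ring B] (n : ℕ) : Prop :=
  ∀ M : ModuleCat.{0} Bᵐᵒᵖ, ∃ (P : ℕ → ModuleCat.{0} Bᵐᵒᵖ)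
    (d : ∀ i, P (i + 1) →ₗ[Bᵐᵒᵖ] P i) (e : P 0 →ₗ[Bᵐᵒᵖ] M),
    (∀ i, Module.Projective Bᵐᵒᵖ (P i)) ∧ Surjective e ∧
    LinearMap.range (d 0) = LinearMap.ker e ∧
    (∀ i, LinearMap.range (d (i + 1)) = LinearMap.ker (d i)) ∧
    (∀ i, n < i → Subsingleton (P i))

/-- A 2-periodic (ℤ/2-graded) complex of right `B`-modules: a pair of maps
`d1 : M1 → M0` and `d0 : M0 → M1` with `d0 ∘ d1 = 0` and `d1 ∘ d0 = 0`. -/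
structure Cplx2 (B : Type) [Ring B] : Type 1 where
  X1 : ModuleCat.{0} Bᵐᵒᵖ
  X0 : ModuleCat.{0} Bᵐᵒᵖ
  d1 : X1 →ₗ[Bᵐᵒᵖ] X0
  d0 : X0 →ₗ[Bᵐᵒᵖ] X1
  h01 : ∀ x, d0 (d1 x) = 0
  h10 : ∀ x, d1 (d0 x) = 0

namespace Cplx2

variable {B : Type} [Ring B]

/-- Morphisms of 2-periodic complexes: pairs of linear maps commuting with the
differentials; they form an additive subgroup of the product of hom groups. -/
def homSet (C D : Cplx2 B) :
    AddSubgroup ((C.X1 →ₗ[Bᵐᵒᵖ] D.X1) × (C.X0 →ₗ[Bᵐᵒᵖ] D.X0)) where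
  carrier := {s | (∀ x, D.d1 (s.1 x) = s.2 (C.d1 x)) ∧ (∀ x, D.d0 (s.2 x) = s.1 (C.d0 x))}
  add_mem' := fun ha hb =>
    ⟨fun x => by simp [ha.1 x, hb.1 x], fun x => by simp [ha.2 x, hb.2 x]⟩
  zero_mem' := ⟨fun x => by simp, fun x => by simp⟩
  neg_mem' := fun ha => ⟨fun x => by simp [ha.1 x], fun x => by simp [ha.2 x]⟩

/-- The type of morphisms of 2-periodic complexes. -/
abbrev Hom (C D : Cplx2 B) : Type := C.homSet D

/-- Composition of morphisms of 2-periodic complexes. -/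
def Hom.comp {C D E : Cplx2 B} (g : D.Hom E) (f : C.Hom D) : C.Hom E :=
  ⟨(g.val.1 ∘ₗ f.val.1, g.val.2 ∘ₗ f.val.2),
    ⟨fun x => by simp [g.prop.1, f.prop.1], fun x => by simp [g.prop.2, f.prop.2]⟩⟩

/-- The identity morphism of a 2-periodic complex. -/
def Hom.id (C : Cplx2 B) : C.Hom C :=
  ⟨(LinearMap.id, LinearMap.id), ⟨fun _ => rfl, fun _ => rfl⟩⟩

/-- Two 2-periodic complexes are isomorphic (in the abelian category `C_2(mod B)`). -/
def Iso (C D : Cplx2 B) : Prop :=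
  ∃ f : C.Hom D, Bijective f.val.1 ∧ Bijective f.val.2

/-- Direct sum of two 2-periodic complexes. -/
def dsum (C D : Cplx2 B) : Cplx2 B where
  X1 := ModuleCat.of Bᵐᵒᵖ (C.X1 × D.X1)
  X0 := ModuleCat.of Bᵐᵒᵖ (C.X0 × D.X0)
  d1 := C.d1.prodMap D.d1
  d0 := C.d0.prodMap D.d0
  h01 := fun x => Prod.ext (C.h01 x.1) (D.h01 x.2)
  h10 := fun x => Prod.ext (C.h10 x.1) (D.h10 x.2)

/-- The shift (involution `*`) of a 2-periodic complex: components interchanged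
and differentials negated. -/
def shift (C : Cplx2 B) : Cplx2 B where
  X1 := C.X0
  X0 := C.X1
  d1 := -C.d0
  d0 := -C.d1
  h01 := fun x => by simp [C.h10]
  h10 := fun x => by simp [C.h01]

/-- The degree `0` homology `H_0 = ker d0 / im d1` of a 2-periodic complex. -/
abbrev H0 (C : Cplx2 B) :=
  (LinearMap.ker C.d0) ⧸ ((LinearMap.range C.d1).comap (LinearMap.ker C.d0).subtype)

/-- A 2-periodic complex is acyclic if `H_0` and `H_1` both vanish. -/
def Acyclic (C : Cplx2 B) : Prop :=
  LinearMap.range C.d1 = LinearMap.ker C.d0 ∧ LinearMap.range C.d0 = LinearMap.ker C.d1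

/-- Both components are projective modules. -/
def Proj (C : Cplx2 B) : Prop :=
  Module.Projective Bᵐᵒᵖ C.X1 ∧ Module.Projective Bᵐᵒᵖ C.X0

/-- Both components are finitely generated (equivalently, finite-dimensional over `k`). -/
def FinDim (C : Cplx2 B) : Prop :=
  Module.Finite Bᵐᵒᵖ C.X1 ∧ Module.Finite Bᵐᵒᵖ C.X0

end Cplx2

/-- The acyclic 2-periodic complex `K_P`: both components `P`, `d1 = id`, `d0 = 0`. -/
def KP {B : Type} [Ring B] (P : ModuleCat.{0} Bᵐᵒᵖ) : Cplx2 B :=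
  ⟨P, P, LinearMap.id, 0, fun x => by simp, fun x => by simp⟩

/-- The acyclic 2-periodic complex `K_P^*`: both components `P`, `d1 = 0`, `d0 = id`. -/
def KPs {B : Type} [Ring B] (P : ModuleCat.{0} Bᵐᵒᵖ) : Cplx2 B :=
  ⟨P, P, 0, LinearMap.id, fun x => by simp, fun _ => rfl⟩

/-- The 2-periodic complex `C_A` associated to a projective resolution
`0 → P2 →(a2) P1 →(a1) P0 →(a0) A → 0`, namely `P1 ⇄ P0 ⊕ P2` with
`d1 : x ↦ (a1 x, 0)` and `d0 : (u, v) ↦ a2 v`. -/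
def CA {B : Type} [Ring B] {P0 P1 P2 : Type}
    [AddCommGroup P0] [Module Bᵐᵒᵖ P0] [AddCommGroup P1] [Module Bᵐᵒᵖ P1]
    [AddCommGroup P2] [Module Bᵐᵒᵖ P2]
    (a1 : P1 →ₗ[Bᵐᵒᵖ] P0) (a2 : P2 →ₗ[Bᵐᵒᵖ] P1) (h : ∀ x, a1 (a2 x) = 0) :
    Cplx2 B where
  X1 := ModuleCat.of Bᵐᵒᵖ P1
  X0 := ModuleCat.of Bᵐᵒᵖ (P0 × P2)
  d1 := (LinearMap.inl Bᵐᵒᵖ P0 P2) ∘ₗ a1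
  d0 := a2 ∘ₗ (LinearMap.snd Bᵐᵒᵖ P0 P2)
  h01 := fun _ => map_zero a2
  h10 := fun x => Prod.ext (h x.2) rfl

/-!
Writing a morphism `C_{A1} → C_{A2}` as `(h, (a b; c d))`, compatibility with `d0` gives
`b2 ∘ c = 0`, so `c = 0` as `b2` is injective, and compatibility with both differentials makes
`(a, h, d)` a chain map of resolutions, which descends uniquely to the cokernels `A1 → A2`.
Conversely, by projectivity of the `P_i` and exactness of the `Q`-resolution every
`f : A1 → A2` lifts degree by degree to a chain map `(s0, s1, s2)`, and `(s1, s0 ⊕ s2)` is then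
a morphism `C_{A1} → C_{A2}` inducing `f`.
-/

namespace Function.Exact

variable {R : Type*} [Ring R] {M N P : Type*} [AddCommGroup M] [AddCommGroup N] [AddCommGroup P]
  [Module R M] [Module R N] [Module R P] {f : M →ₗ[R] N} {g : N →ₗ[R] P}

theorem existsUnique_comp_eq_of_comp_eq_zero (h : Exact f g) (hg : Surjective g)
    {P' : Type*} [AddCommGroup P'] [Module R P'] (φ : N →ₗ[R] P') (hφ : φ ∘ₗ f = 0) :
    ∃! ψ : P →ₗ[R] P', ∀ n, ψ (g n) = φ n := by
  refine ⟨(LinearMap.range f).liftQ φ (LinearMap.range_le_ker_iff.mpr hφ) ∘ₗ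
    (h.linearEquivOfSurjective hg).symm.toLinearMap, fun n => by simp, fun ψ hψ => ?_⟩
  ext p
  obtain ⟨n, rfl⟩ := hg p
  simp [hψ]

theorem exists_comp_eq_of_comp_eq_zero (h : Exact f g) {Q : Type*} [AddCommGroup Q]
    [Module R Q] [Module.Projective R Q] (φ : Q →ₗ[R] N) (hφ : g ∘ₗ φ = 0) :
    ∃ ψ : Q →ₗ[R] M, f ∘ₗ ψ = φ := by
  obtain ⟨ψ, hψ⟩ := Module.projective_lifting_property f.rangeRestrict
    (φ.codRestrict _ fun q => (h (φ q)).mp (LinearMap.congr_fun hφ q)) f.surjective_rangeRestrict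
  exact ⟨ψ, LinearMap.ext fun q => congrArg Subtype.val (LinearMap.congr_fun hψ q)⟩

end Function.Exact

section Comparison

variable {R : Type*} [Ring R] {A₁ P₀ P₁ P₂ A₂ Q₀ Q₁ Q₂ : Type*}
  [AddCommGroup A₁] [AddCommGroup P₀] [AddCommGroup P₁] [AddCommGroup P₂]
  [AddCommGroup A₂] [AddCommGroup Q₀] [AddCommGroup Q₁] [AddCommGroup Q₂]
  [Module R A₁] [Module R P₀] [Module R P₁] [Module R P₂]
  [Module R A₂] [Module R Q₀] [Module R Q₁] [Module R Q₂]

theorem exists_chain_map_lift [Module.Projective R P₀] [Module.Projective R P₁]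
    [Module.Projective R P₂] {a₀ : P₀ →ₗ[R] A₁} {a₁ : P₁ →ₗ[R] P₀} {a₂ : P₂ →ₗ[R] P₁}
    {b₀ : Q₀ →ₗ[R] A₂} {b₁ : Q₁ →ₗ[R] Q₀} {b₂ : Q₂ →ₗ[R] Q₁}
    (ha₀₁ : a₀ ∘ₗ a₁ = 0) (ha₁₂ : a₁ ∘ₗ a₂ = 0)
    (hb₀ : Surjective b₀) (hb₀₁ : Exact b₁ b₀) (hb₁₂ : Exact b₂ b₁) (f : A₁ →ₗ[R] A₂) :
    ∃ (s₀ : P₀ →ₗ[R] Q₀) (s₁ : P₁ →ₗ[R] Q₁) (s₂ : P₂ →ₗ[R] Q₂),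
      b₀ ∘ₗ s₀ = f ∘ₗ a₀ ∧ b₁ ∘ₗ s₁ = s₀ ∘ₗ a₁ ∧ b₂ ∘ₗ s₂ = s₁ ∘ₗ a₂ := by
  obtain ⟨s₀, h₀⟩ := Module.projective_lifting_property b₀ (f ∘ₗ a₀) hb₀
  obtain ⟨s₁, h₁⟩ := hb₀₁.exists_comp_eq_of_comp_eq_zero (s₀ ∘ₗ a₁) (by
    rw [← LinearMap.comp_assoc, h₀, LinearMap.comp_assoc, ha₀₁, LinearMap.comp_zero])
  obtain ⟨s₂, h₂⟩ := hb₁₂.exists_comp_eq_of_comp_eq_zero (s₁ ∘ₗ a₂) (by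
    rw [← LinearMap.comp_assoc, h₁, LinearMap.comp_assoc, ha₁₂, LinearMap.comp_zero])
  exact ⟨s₀, s₁, s₂, h₀, h₁, h₂⟩

end Comparison

namespace CA

variable {B : Type} [Ring B] {P0 P1 P2 Q0 Q1 Q2 : Type}
  [AddCommGroup P0] [Module Bᵐᵒᵖ P0] [AddCommGroup P1] [Module Bᵐᵒᵖ P1]
  [AddCommGroup P2] [Module Bᵐᵒᵖ P2] [AddCommGroup Q0] [Module Bᵐᵒᵖ Q0]
  [AddCommGroup Q1] [Module Bᵐᵒᵖ Q1] [AddCommGroup Q2] [Module Bᵐᵒᵖ Q2]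
  {a1 : P1 →ₗ[Bᵐᵒᵖ] P0} {a2 : P2 →ₗ[Bᵐᵒᵖ] P1} {ha : ∀ x, a1 (a2 x) = 0}
  {b1 : Q1 →ₗ[Bᵐᵒᵖ] Q0} {b2 : Q2 →ₗ[Bᵐᵒᵖ] Q1} {hb : ∀ x, b1 (b2 x) = 0}

def homOfChainMap (s0 : P0 →ₗ[Bᵐᵒᵖ] Q0) (s1 : P1 →ₗ[Bᵐᵒᵖ] Q1) (s2 : P2 →ₗ[Bᵐᵒᵖ] Q2)
    (h1 : b1 ∘ₗ s1 = s0 ∘ₗ a1) (h2 : b2 ∘ₗ s2 = s1 ∘ₗ a2) :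
    (CA a1 a2 ha).Hom (CA b1 b2 hb) :=
  ⟨(s1, s0.prodMap s2),
    fun x => Prod.ext (LinearMap.congr_fun h1 x) (map_zero s2).symm,
    fun w => LinearMap.congr_fun h2 w.2⟩

variable (F : (CA a1 a2 ha).Hom (CA b1 b2 hb))

theorem hom_apply_inl_apply (x : P1) : F.val.2 (a1 x, 0) = (b1 (F.val.1 x), 0) :=
  (F.prop.1 x).symm

theorem hom_apply_snd_apply (w : P0 × P2) : b2 (F.val.2 w).2 = F.val.1 (a2 w.2) :=
  F.prop.2 w

theorem hom_snd_apply_inl_eq_zero (hb2 : Injective b2) (u : P0) : (F.val.2 (u, 0)).2 = 0 :=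
  hb2 <| (hom_apply_snd_apply F (u, 0)).trans <|
    ((congrArg F.val.1 (map_zero a2)).trans (map_zero _)).trans (map_zero b2).symm

theorem hom_existsUnique_induced {A1 A2 : Type} [AddCommGroup A1] [Module Bᵐᵒᵖ A1]
    [AddCommGroup A2] [Module Bᵐᵒᵖ A2] {a0 : P0 →ₗ[Bᵐᵒᵖ] A1} {b0 : Q0 →ₗ[Bᵐᵒᵖ] A2}
    (hexact : Exact a1 a0) (hsurj : Surjective a0) (hb0 : b0 ∘ₗ b1 = 0) :
    ∃! f : A1 →ₗ[Bᵐᵒᵖ] A2, ∀ u, f (a0 u) = b0 (F.val.2 (u, 0)).1 := by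
  refine hexact.existsUnique_comp_eq_of_comp_eq_zero hsurj
    (b0 ∘ₗ LinearMap.fst _ _ _ ∘ₗ F.val.2 ∘ₗ LinearMap.inl _ _ _) (LinearMap.ext fun x => ?_)
  show b0 (F.val.2 (a1 x, 0)).1 = 0
  rw [hom_apply_inl_apply]
  exact LinearMap.congr_fun hb0 (F.val.1 x)

end CA

theorem hom_complexes_to_hom_modules_surjective_general
    (B : Type) [Ring B]
    (A1 P0 P1 P2 : Type)
    [AddCommGroup A1] [Module Bᵐᵒᵖ A1]
    [AddCommGroup P0] [Module Bᵐᵒᵖ P0]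
    [AddCommGroup P1] [Module Bᵐᵒᵖ P1]
    [AddCommGroup P2] [Module Bᵐᵒᵖ P2]
    (a0 : P0 →ₗ[Bᵐᵒᵖ] A1) (a1 : P1 →ₗ[Bᵐᵒᵖ] P0) (a2 : P2 →ₗ[Bᵐᵒᵖ] P1)
    (hproj0 : Module.Projective Bᵐᵒᵖ P0) (hproj1 : Module.Projective Bᵐᵒᵖ P1)
    (hproj2 : Module.Projective Bᵐᵒᵖ P2)
    (hex1 : LinearMap.range a1 = LinearMap.ker a0) (hsurj : Surjective a0)
    (hc : ∀ x, a1 (a2 x) = 0)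
    (A2 Q0 Q1 Q2 : Type)
    [AddCommGroup A2] [Module Bᵐᵒᵖ A2]
    [AddCommGroup Q0] [Module Bᵐᵒᵖ Q0]
    [AddCommGroup Q1] [Module Bᵐᵒᵖ Q1]
    [AddCommGroup Q2] [Module Bᵐᵒᵖ Q2]
    (b0 : Q0 →ₗ[Bᵐᵒᵖ] A2) (b1 : Q1 →ₗ[Bᵐᵒᵖ] Q0) (b2 : Q2 →ₗ[Bᵐᵒᵖ] Q1)
    (hinj' : Injective b2) (hex2' : LinearMap.range b2 = LinearMap.ker b1)
    (hex1' : LinearMap.range b1 = LinearMap.ker b0) (hsurj' : Surjective b0)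
    (hc' : ∀ x, b1 (b2 x) = 0)
    :
    (∀ F : (CA a1 a2 hc).Hom (CA b1 b2 hc'),
      (∀ u : P0, (F.val.2 (u, 0)).2 = (0 : Q2)) ∧
      (∀ x : P1, (F.val.2 (a1 x, 0)).1 = b1 (F.val.1 x)) ∧
      (∀ v : P2, F.val.1 (a2 v) = b2 ((F.val.2 (0, v)).2)) ∧
      (∃! f : A1 →ₗ[Bᵐᵒᵖ] A2, ∀ u : P0, f (a0 u) = b0 ((F.val.2 (u, 0)).1))) ∧
    (∀ f : A1 →ₗ[Bᵐᵒᵖ] A2, ∃ F : (CA a1 a2 hc).Hom (CA b1 b2 hc'),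
      ∀ u : P0, f (a0 u) = b0 ((F.val.2 (u, 0)).1)) := by
  have ha01 : Exact a1 a0 := LinearMap.exact_iff.mpr hex1.symm
  have hb01 : Exact b1 b0 := LinearMap.exact_iff.mpr hex1'.symm
  have hb12 : Exact b2 b1 := LinearMap.exact_iff.mpr hex2'.symm
  refine ⟨fun F => ⟨CA.hom_snd_apply_inl_eq_zero F hinj',
    fun x => by rw [CA.hom_apply_inl_apply], fun v => (CA.hom_apply_snd_apply F (0, v)).symm,
    CA.hom_existsUnique_induced F ha01 hsurj hb01.linearMap_comp_eq_zero⟩, fun f => ?_⟩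
  obtain ⟨s0, s1, s2, h0, h1, h2⟩ := exists_chain_map_lift ha01.linearMap_comp_eq_zero
    (LinearMap.ext hc) hsurj' hb01 hb12 f
  exact ⟨CA.homOfChainMap s0 s1 s2 h1 h2, fun u => (LinearMap.congr_fun h0 u).symm⟩

/-- Every morphism of 2-periodic complexes `C_{A1} → C_{A2}` has
vanishing component `c : P0 → Q2`, its components form a chain map between the two
resolutions inducing a unique map `f : A1 → A2`, and the resulting map
`φ : Hom_{C_2(mod B)}(C_{A1}, C_{A2}) → Hom_B(A1, A2)` is surjective. -/
theorem hom_complexes_to_hom_modules_surjective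
    (k : Type) [Field k] [Fintype k]
    (B : Type) [Ring B] [Algebra k B] [FiniteDimensional k B]
    (hgldim : GlobalDimLE B 2)
    (A1 P0 P1 P2 : Type)
    [AddCommGroup A1] [Module Bᵐᵒᵖ A1] [Module.Finite Bᵐᵒᵖ A1]
    [AddCommGroup P0] [Module Bᵐᵒᵖ P0] [Module.Finite Bᵐᵒᵖ P0]
    [AddCommGroup P1] [Module Bᵐᵒᵖ P1] [Module.Finite Bᵐᵒᵖ P1]
    [AddCommGroup P2] [Module Bᵐᵒᵖ P2] [Module.Finite Bᵐᵒᵖ P2]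
    (a0 : P0 →ₗ[Bᵐᵒᵖ] A1) (a1 : P1 →ₗ[Bᵐᵒᵖ] P0) (a2 : P2 →ₗ[Bᵐᵒᵖ] P1)
    (hproj0 : Module.Projective Bᵐᵒᵖ P0) (hproj1 : Module.Projective Bᵐᵒᵖ P1)
    (hproj2 : Module.Projective Bᵐᵒᵖ P2)
    (hinj : Injective a2) (hex2 : LinearMap.range a2 = LinearMap.ker a1)
    (hex1 : LinearMap.range a1 = LinearMap.ker a0) (hsurj : Surjective a0)
    (hmin1 : Superfluous (LinearMap.range a1))
    (hmin2 : Superfluous (LinearMap.range a2))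
    (hc : ∀ x, a1 (a2 x) = 0)
    (A2 Q0 Q1 Q2 : Type)
    [AddCommGroup A2] [Module Bᵐᵒᵖ A2] [Module.Finite Bᵐᵒᵖ A2]
    [AddCommGroup Q0] [Module Bᵐᵒᵖ Q0] [Module.Finite Bᵐᵒᵖ Q0]
    [AddCommGroup Q1] [Module Bᵐᵒᵖ Q1] [Module.Finite Bᵐᵒᵖ Q1]
    [AddCommGroup Q2] [Module Bᵐᵒᵖ Q2] [Module.Finite Bᵐᵒᵖ Q2]
    (b0 : Q0 →ₗ[Bᵐᵒᵖ] A2) (b1 : Q1 →ₗ[Bᵐᵒᵖ] Q0) (b2 : Q2 →ₗ[Bᵐᵒᵖ] Q1)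
    (hproj0' : Module.Projective Bᵐᵒᵖ Q0) (hproj1' : Module.Projective Bᵐᵒᵖ Q1)
    (hproj2' : Module.Projective Bᵐᵒᵖ Q2)
    (hinj' : Injective b2) (hex2' : LinearMap.range b2 = LinearMap.ker b1)
    (hex1' : LinearMap.range b1 = LinearMap.ker b0) (hsurj' : Surjective b0)
    (hmin1' : Superfluous (LinearMap.range b1))
    (hmin2' : Superfluous (LinearMap.range b2))
    (hc' : ∀ x, b1 (b2 x) = 0)
    :
    (∀ F : (CA a1 a2 hc).Hom (CA b1 b2 hc'),
      (∀ u : P0, (F.val.2 (u, 0)).2 = (0 : Q2)) ∧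
      (∀ x : P1, (F.val.2 (a1 x, 0)).1 = b1 (F.val.1 x)) ∧
      (∀ v : P2, F.val.1 (a2 v) = b2 ((F.val.2 (0, v)).2)) ∧
      (∃! f : A1 →ₗ[Bᵐᵒᵖ] A2, ∀ u : P0, f (a0 u) = b0 ((F.val.2 (u, 0)).1))) ∧
    (∀ f : A1 →ₗ[Bᵐᵒᵖ] A2, ∃ F : (CA a1 a2 hc).Hom (CA b1 b2 hc'),
      ∀ u : P0, f (a0 u) = b0 ((F.val.2 (u, 0)).1)) :=
  hom_complexes_to_hom_modules_surjective_general B A1 P0 P1 P2 a0 a1 a2 hproj0 hproj1 hproj2 hex1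
    hsurj hc A2 Q0 Q1 Q2 b0 b1 b2 hinj' hex2' hex1' hsurj' hc'
end

section
/- Let B be a finite-dimensional algebra over k = F_q of global dimension at most 2, let A1, A2 be finite-dimensional right B-modules with minimal projective resolutions 0 → P2 → P1 → P0 → A1 → 0 and 0 → Q2 → Q1 → Q0 → A2 → 0, and let φ : Hom_{C_2(mod B)}(C_{A1}, C_{A2}) → Hom_B(A1, A2) be the surjective k-linear map sending a morphism of 2-periodic complexes to the induced morphism A1 → A2. Then the kernel of φ has cardinality |Hom_B(P2, Q0)| · |Hom_B(P1, Q2)| · |Hom_B(P0, Q1)| / |Hom_B(P0, Q2)|. -/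
open Function

/-!
Write a morphism `C_{A1} → C_{A2}` as `(h, (α β; γ δ))`. If it lies in `ker φ`, then `α` lands
in `ker b0 = im b1`, so `α = b1 s` because `P0` is projective; then `h - s a1` lands in
`ker b1 = im b2`, so `h = b2 t + s a1`, and injectivity of `b2` forces `γ = 0` and `δ = t a2`.
Hence `(β, t, s) ↦ (b2 t + s a1, (b1 s β; 0 t a2))` is an additive map from
`Hom(P2, Q0) × Hom(P1, Q2) × Hom(P0, Q1)` onto `ker φ`, and its kernel consists of the triples
`(0, -r a1, b2 r)`, a copy of `Hom(P0, Q2)`.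
-/

section Factorization

variable {R M N P : Type*} [Ring R] [AddCommGroup M] [Module R M]
  [AddCommGroup N] [Module R N] [AddCommGroup P] [Module R P] {f : M →ₗ[R] N} {g : P →ₗ[R] N}

theorem LinearMap.exists_comp_eq_of_range_le [Module.Projective R P]
    (hle : LinearMap.range g ≤ LinearMap.range f) : ∃ s : P →ₗ[R] M, f ∘ₗ s = g := by
  obtain ⟨s, hs⟩ := Module.projective_lifting_property f.rangeRestrict
    (g.codRestrict _ fun x => hle ⟨x, rfl⟩) f.surjective_rangeRestrict
  exact ⟨s, by ext x; exact congr_arg Subtype.val (LinearMap.congr_fun hs x)⟩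

theorem LinearMap.exists_comp_eq_of_injective_of_range_le (hf : Injective f)
    (hle : LinearMap.range g ≤ LinearMap.range f) : ∃ t : P →ₗ[R] M, f ∘ₗ t = g :=
  ⟨(LinearEquiv.ofInjective f hf).symm.toLinearMap ∘ₗ g.codRestrict _ fun x => hle ⟨x, rfl⟩,
    by ext; simp⟩

end Factorization

theorem AddMonoidHom.card_range_mul_card_eq_of_ker_eq_range {G H K : Type*} [AddGroup G]
    [AddGroup H] [AddGroup K] (ψ : G →+ H) (ν : K →+ G) (hν : Injective ν)
    (hker : ψ.ker = ν.range) : Nat.card ψ.range * Nat.card K = Nat.card G := by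
  rw [AddSubgroup.card_eq_card_quotient_mul_card_addSubgroup ψ.ker,
    Nat.card_congr (QuotientAddGroup.quotientKerEquivRange ψ).toEquiv, hker,
    Nat.card_congr (AddMonoidHom.ofInjective hν).toEquiv]

namespace CA

variable {B : Type} [Ring B] {P0 P1 P2 Q0 Q1 Q2 : Type}
  [AddCommGroup P0] [Module Bᵐᵒᵖ P0] [AddCommGroup P1] [Module Bᵐᵒᵖ P1]
  [AddCommGroup P2] [Module Bᵐᵒᵖ P2] [AddCommGroup Q0] [Module Bᵐᵒᵖ Q0]
  [AddCommGroup Q1] [Module Bᵐᵒᵖ Q1] [AddCommGroup Q2] [Module Bᵐᵒᵖ Q2]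
  {a1 : P1 →ₗ[Bᵐᵒᵖ] P0} {a2 : P2 →ₗ[Bᵐᵒᵖ] P1} {b1 : Q1 →ₗ[Bᵐᵒᵖ] Q0} {b2 : Q2 →ₗ[Bᵐᵒᵖ] Q1}
  (hc : ∀ x, a1 (a2 x) = 0) (hc' : ∀ x, b1 (b2 x) = 0)

theorem mem_homSet_iff {h : P1 →ₗ[Bᵐᵒᵖ] Q1} {g : P0 × P2 →ₗ[Bᵐᵒᵖ] Q0 × Q2} :
    (h, g) ∈ (CA a1 a2 hc).homSet (CA b1 b2 hc') ↔
      (∀ x, g (a1 x, 0) = (b1 (h x), 0)) ∧ ∀ y, b2 (g y).2 = h (a2 y.2) :=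
  ⟨fun hF => ⟨fun x => (hF.1 x).symm, hF.2⟩, fun hF => ⟨fun x => (hF.1 x).symm, hF.2⟩⟩

variable (a1 a2 b1 b2) in
def mapsOfTriple : ((P2 →ₗ[Bᵐᵒᵖ] Q0) × (P1 →ₗ[Bᵐᵒᵖ] Q2) × (P0 →ₗ[Bᵐᵒᵖ] Q1)) →+
    (P1 →ₗ[Bᵐᵒᵖ] Q1) × (P0 × P2 →ₗ[Bᵐᵒᵖ] Q0 × Q2) where
  toFun x := (b2 ∘ₗ x.2.1 + x.2.2 ∘ₗ a1,
      ((b1 ∘ₗ x.2.2).coprod x.1).prod ((0 : P0 →ₗ[Bᵐᵒᵖ] Q2).coprod (x.2.1 ∘ₗ a2)))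
  map_zero' := by ext <;> simp
  map_add' x y := by ext <;> simp [add_add_add_comm]

theorem mapsOfTriple_fst (x : (P2 →ₗ[Bᵐᵒᵖ] Q0) × (P1 →ₗ[Bᵐᵒᵖ] Q2) × (P0 →ₗ[Bᵐᵒᵖ] Q1)) :
    (mapsOfTriple a1 a2 b1 b2 x).1 = b2 ∘ₗ x.2.1 + x.2.2 ∘ₗ a1 :=
  rfl

@[simp]
theorem mapsOfTriple_snd_apply (x : (P2 →ₗ[Bᵐᵒᵖ] Q0) × (P1 →ₗ[Bᵐᵒᵖ] Q2) × (P0 →ₗ[Bᵐᵒᵖ] Q1))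
    (p : P0 × P2) :
    (mapsOfTriple a1 a2 b1 b2 x).2 p = (b1 (x.2.2 p.1) + x.1 p.2, x.2.1 (a2 p.2)) := by
  simp [mapsOfTriple]

def homOfTriple :
    ((P2 →ₗ[Bᵐᵒᵖ] Q0) × (P1 →ₗ[Bᵐᵒᵖ] Q2) × (P0 →ₗ[Bᵐᵒᵖ] Q1)) →+
      (CA a1 a2 hc).Hom (CA b1 b2 hc') :=
  (mapsOfTriple a1 a2 b1 b2).codRestrict _ fun _ =>
    (mem_homSet_iff hc hc').2 ⟨fun _ => by simp [hc'], fun _ => by simp [hc]⟩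

variable (a1 b2) in
def nullTriple :
    (P0 →ₗ[Bᵐᵒᵖ] Q2) →+ (P2 →ₗ[Bᵐᵒᵖ] Q0) × (P1 →ₗ[Bᵐᵒᵖ] Q2) × (P0 →ₗ[Bᵐᵒᵖ] Q1) where
  toFun r := (0, -(r ∘ₗ a1), b2 ∘ₗ r)
  map_zero' := by ext <;> simp
  map_add' r r' := by ext <;> simp [add_comm]

@[simp]
theorem nullTriple_apply (r : P0 →ₗ[Bᵐᵒᵖ] Q2) :
    (nullTriple a1 b2 r : (P2 →ₗ[Bᵐᵒᵖ] Q0) × _) = (0, -(r ∘ₗ a1), b2 ∘ₗ r) :=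
  rfl

theorem nullTriple_injective (hb2 : Injective b2) :
    Injective (nullTriple a1 b2 : _ →+ (P2 →ₗ[Bᵐᵒᵖ] Q0) × _) :=
  fun _ _ h => LinearMap.ext fun u => hb2 (LinearMap.congr_fun (congrArg (·.2.2) h) u)

theorem mem_range_homOfTriple [Module.Projective Bᵐᵒᵖ P0] (hb2 : Injective b2)
    (hex2 : LinearMap.range b2 = LinearMap.ker b1) (F : (CA a1 a2 hc).Hom (CA b1 b2 hc'))
    (hF : ∀ u : P0, (F.val.2 (u, 0)).1 ∈ LinearMap.range b1) :
    F ∈ (homOfTriple hc hc').range := by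
  obtain ⟨⟨h, g⟩, hmem⟩ := F
  -- the components of `F` are typed over `ModuleCat.of`, which `simp` does not see through
  change P1 →ₗ[Bᵐᵒᵖ] Q1 at h
  change P0 × P2 →ₗ[Bᵐᵒᵖ] Q0 × Q2 at g
  obtain ⟨hg1, hg2⟩ := (mem_homSet_iff hc hc').1 hmem
  obtain ⟨s, hs⟩ := LinearMap.exists_comp_eq_of_range_le (f := b1)
    (g := LinearMap.fst _ _ _ ∘ₗ g ∘ₗ LinearMap.inl _ _ _) (by rintro _ ⟨u, rfl⟩; exact hF u)
  have hs_apply (u : P0) : b1 (s u) = (g (u, 0)).1 := LinearMap.congr_fun hs u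
  obtain ⟨t, ht⟩ := LinearMap.exists_comp_eq_of_injective_of_range_le hb2
    (g := h - s ∘ₗ a1) <| by
      rintro _ ⟨x, rfl⟩
      simp [hex2, hs_apply, hg1]
  have ht_apply (x : P1) : b2 (t x) = h x - s (a1 x) := LinearMap.congr_fun ht x
  refine ⟨(LinearMap.fst _ _ _ ∘ₗ g ∘ₗ LinearMap.inr _ _ _, t, s), Subtype.ext ?_⟩
  show mapsOfTriple a1 a2 b1 b2 _ = (h, g)
  refine Prod.ext (by rw [mapsOfTriple_fst, ht, sub_add_cancel]) (LinearMap.ext fun ⟨u, v⟩ => ?_)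
  refine Prod.ext ?_ (hb2 ?_)
  · simp [hs_apply, ← Prod.fst_add, ← map_add]
  · simp [ht_apply, hc, hg2]

theorem ker_homOfTriple (hb2 : Injective b2) (hex2 : LinearMap.range b2 = LinearMap.ker b1) :
    (homOfTriple hc hc').ker = (nullTriple a1 b2).range := by
  ext x
  constructor
  · obtain ⟨β, t, s⟩ := x
    intro hker
    have hzero : mapsOfTriple a1 a2 b1 b2 (β, t, s) = 0 := congrArg Subtype.val hker
    have hfst (x : P1) : b2 (t x) + s (a1 x) = 0 := LinearMap.congr_fun (congrArg Prod.fst hzero) x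
    have hsnd (p : P0 × P2) : (b1 (s p.1) + β p.2, t (a2 p.2)) = 0 := by
      rw [← mapsOfTriple_snd_apply (a1 := a1) (a2 := a2) (b1 := b1) (b2 := b2) (β, t, s) p, hzero]
      rfl
    obtain ⟨r, hr⟩ := LinearMap.exists_comp_eq_of_injective_of_range_le hb2 (g := s) <| by
      rintro _ ⟨u, rfl⟩
      simpa [hex2] using congrArg Prod.fst (hsnd (u, 0))
    refine ⟨r, Prod.ext ?_ (Prod.ext ?_ hr)⟩
    · ext v
      simpa using (congrArg Prod.fst (hsnd (0, v))).symm
    · ext x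
      apply hb2
      simpa [← hr, neg_eq_iff_add_eq_zero, add_comm] using hfst x
  · rintro ⟨r, rfl⟩
    refine Subtype.ext (show mapsOfTriple a1 a2 b1 b2 (nullTriple a1 b2 r) = 0 from ?_)
    refine Prod.ext ?_ (LinearMap.ext fun p => ?_)
    · ext; simp [mapsOfTriple_fst]
    · simp [hc, hc']

theorem mem_range_homOfTriple_iff {A : Type} [AddCommGroup A] [Module Bᵐᵒᵖ A]
    [Module.Projective Bᵐᵒᵖ P0] {b0 : Q0 →ₗ[Bᵐᵒᵖ] A} (hex1 : LinearMap.range b1 = LinearMap.ker b0)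
    (hb2 : Injective b2) (hex2 : LinearMap.range b2 = LinearMap.ker b1)
    (F : (CA a1 a2 hc).Hom (CA b1 b2 hc')) :
    F ∈ (homOfTriple hc hc').range ↔ ∀ u : P0, b0 ((F.val.2 (u, 0)).1) = 0 := by
  refine ⟨?_, fun hF => mem_range_homOfTriple hc hc' hb2 hex2 F fun u => hex1 ▸ hF u⟩
  rintro ⟨x, rfl⟩ u
  show b0 ((mapsOfTriple a1 a2 b1 b2 x).2 (u, 0)).1 = 0
  simp [← LinearMap.mem_ker, ← hex1]

end CA

/-- The condition on `F` says that `φ F = 0`: the map `f` induced by `F` satisfies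
`f ∘ a0 = b0 ∘ α`, where `α : P0 → Q0` is the corner entry of the degree-0 component of `F`. -/
theorem card_ker_phi_general
    (B : Type) [Ring B]
    (P0 P1 P2 : Type)
    [AddCommGroup P0] [Module Bᵐᵒᵖ P0]
    [AddCommGroup P1] [Module Bᵐᵒᵖ P1]
    [AddCommGroup P2] [Module Bᵐᵒᵖ P2]
    (a1 : P1 →ₗ[Bᵐᵒᵖ] P0) (a2 : P2 →ₗ[Bᵐᵒᵖ] P1)
    (hproj0 : Module.Projective Bᵐᵒᵖ P0)
    (hc : ∀ x, a1 (a2 x) = 0)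
    (A2 Q0 Q1 Q2 : Type)
    [AddCommGroup A2] [Module Bᵐᵒᵖ A2]
    [AddCommGroup Q0] [Module Bᵐᵒᵖ Q0]
    [AddCommGroup Q1] [Module Bᵐᵒᵖ Q1]
    [AddCommGroup Q2] [Module Bᵐᵒᵖ Q2]
    (b0 : Q0 →ₗ[Bᵐᵒᵖ] A2) (b1 : Q1 →ₗ[Bᵐᵒᵖ] Q0) (b2 : Q2 →ₗ[Bᵐᵒᵖ] Q1)
    (hinj' : Injective b2) (hex2' : LinearMap.range b2 = LinearMap.ker b1)
    (hex1' : LinearMap.range b1 = LinearMap.ker b0)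
    (hc' : ∀ x, b1 (b2 x) = 0)
    :
    Nat.card {F : (CA a1 a2 hc).Hom (CA b1 b2 hc') //
        ∀ u : P0, b0 ((F.val.2 (u, 0)).1) = 0} *
      Nat.card (P0 →ₗ[Bᵐᵒᵖ] Q2) =
    Nat.card (P2 →ₗ[Bᵐᵒᵖ] Q0) * Nat.card (P1 →ₗ[Bᵐᵒᵖ] Q2) *
      Nat.card (P0 →ₗ[Bᵐᵒᵖ] Q1) := by
  calc _ = Nat.card (CA.homOfTriple hc hc').range * Nat.card (P0 →ₗ[Bᵐᵒᵖ] Q2) := by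
        rw [Nat.card_congr (Equiv.subtypeEquivRight
          (CA.mem_range_homOfTriple_iff hc hc' hex1' hinj' hex2'))]
    _ = Nat.card ((P2 →ₗ[Bᵐᵒᵖ] Q0) × (P1 →ₗ[Bᵐᵒᵖ] Q2) × (P0 →ₗ[Bᵐᵒᵖ] Q1)) :=
        AddMonoidHom.card_range_mul_card_eq_of_ker_eq_range _ _ (CA.nullTriple_injective hinj')
          (CA.ker_homOfTriple hc hc' hinj' hex2')
    _ = _ := by rw [Nat.card_prod, Nat.card_prod, mul_assoc]

/-- The kernel of the surjection
`φ : Hom_{C_2(mod B)}(C_{A1}, C_{A2}) → Hom_B(A1, A2)` (which sends a morphism of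
2-periodic complexes to the induced module map, so that `F ∈ ker φ` iff the induced
map — characterized by `f ∘ a0 = b0 ∘ a` — vanishes, i.e. iff `b0 ∘ a = 0`) has
cardinality `|Hom(P2,Q0)| ⬝ |Hom(P1,Q2)| ⬝ |Hom(P0,Q1)| / |Hom(P0,Q2)|`. -/
theorem card_ker_phi
    (k : Type) [Field k] [Fintype k]
    (B : Type) [Ring B] [Algebra k B] [FiniteDimensional k B]
    (hgldim : GlobalDimLE B 2)
    (A1 P0 P1 P2 : Type)
    [AddCommGroup A1] [Module Bᵐᵒᵖ A1] [Module.Finite Bᵐᵒᵖ A1]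
    [AddCommGroup P0] [Module Bᵐᵒᵖ P0] [Module.Finite Bᵐᵒᵖ P0]
    [AddCommGroup P1] [Module Bᵐᵒᵖ P1] [Module.Finite Bᵐᵒᵖ P1]
    [AddCommGroup P2] [Module Bᵐᵒᵖ P2] [Module.Finite Bᵐᵒᵖ P2]
    (a0 : P0 →ₗ[Bᵐᵒᵖ] A1) (a1 : P1 →ₗ[Bᵐᵒᵖ] P0) (a2 : P2 →ₗ[Bᵐᵒᵖ] P1)
    (hproj0 : Module.Projective Bᵐᵒᵖ P0) (hproj1 : Module.Projective Bᵐᵒᵖ P1)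
    (hproj2 : Module.Projective Bᵐᵒᵖ P2)
    (hinj : Injective a2) (hex2 : LinearMap.range a2 = LinearMap.ker a1)
    (hex1 : LinearMap.range a1 = LinearMap.ker a0) (hsurj : Surjective a0)
    (hmin1 : Superfluous (LinearMap.range a1))
    (hmin2 : Superfluous (LinearMap.range a2))
    (hc : ∀ x, a1 (a2 x) = 0)
    (A2 Q0 Q1 Q2 : Type)
    [AddCommGroup A2] [Module Bᵐᵒᵖ A2] [Module.Finite Bᵐᵒᵖ A2]
    [AddCommGroup Q0] [Module Bᵐᵒᵖ Q0] [Module.Finite Bᵐᵒᵖ Q0]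
    [AddCommGroup Q1] [Module Bᵐᵒᵖ Q1] [Module.Finite Bᵐᵒᵖ Q1]
    [AddCommGroup Q2] [Module Bᵐᵒᵖ Q2] [Module.Finite Bᵐᵒᵖ Q2]
    (b0 : Q0 →ₗ[Bᵐᵒᵖ] A2) (b1 : Q1 →ₗ[Bᵐᵒᵖ] Q0) (b2 : Q2 →ₗ[Bᵐᵒᵖ] Q1)
    (hproj0' : Module.Projective Bᵐᵒᵖ Q0) (hproj1' : Module.Projective Bᵐᵒᵖ Q1)
    (hproj2' : Module.Projective Bᵐᵒᵖ Q2)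
    (hinj' : Injective b2) (hex2' : LinearMap.range b2 = LinearMap.ker b1)
    (hex1' : LinearMap.range b1 = LinearMap.ker b0) (hsurj' : Surjective b0)
    (hmin1' : Superfluous (LinearMap.range b1))
    (hmin2' : Superfluous (LinearMap.range b2))
    (hc' : ∀ x, b1 (b2 x) = 0)
    :
    Nat.card {F : (CA a1 a2 hc).Hom (CA b1 b2 hc') //
        ∀ u : P0, b0 ((F.val.2 (u, 0)).1) = 0} *
      Nat.card (P0 →ₗ[Bᵐᵒᵖ] Q2) =
    Nat.card (P2 →ₗ[Bᵐᵒᵖ] Q0) * Nat.card (P1 →ₗ[Bᵐᵒᵖ] Q2) *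
      Nat.card (P0 →ₗ[Bᵐᵒᵖ] Q1) :=
  card_ker_phi_general B P0 P1 P2 a1 a2 hproj0 hc A2 Q0 Q1 Q2 b0 b1 b2 hinj' hex2' hex1' hc'
end

section
/- Let B be a finite-dimensional algebra over k = F_q of finite global dimension, and let M•, N• be 2-periodic complexes of finite-dimensional projective right B-modules. Then there is an isomorphism of abelian groups Ext^1_{C_2(mod B)}(N•, M•) ≅ Hom_{K_2(mod B)}(N•, M•*), where K_2(mod B) is the homotopy category of 2-periodic complexes and M•* is the shift of M•. -/
/-!
Since `N` is projective in each degree, an extension `0 → M → W → N → 0` splits degreewise,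
`W ≅ M ⊕ N`, and the differential of `W` becomes upper triangular with diagonal `d_M`, `d_N`.
Its off-diagonal part is then a morphism `N → M*` (this is `d_W² = 0`), and another degreewise
splitting changes it by a null-homotopic morphism. Conversely every `f : N → M*` defines such an
extension on `M ⊕ N`, homotopic morphisms give extensions related by a unipotent isomorphism,
and any morphism of extensions is an isomorphism by the short five lemma.
-/

open Function

namespace Cplx2

variable {B : Type} [Ring B]

/-- Two morphisms of 2-periodic complexes are homotopic. -/
def Homotopic {C D : Cplx2 B} (f g : C.Hom D) : Prop :=
  ∃ (h1 : C.X1 →ₗ[Bᵐᵒᵖ] D.X0) (h0 : C.X0 →ₗ[Bᵐᵒᵖ] D.X1),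
    (∀ x, g.val.1 x - f.val.1 x = D.d0 (h1 x) + h0 (C.d1 x)) ∧
    (∀ x, g.val.2 x - f.val.2 x = D.d1 (h0 x) + h1 (C.d0 x))

/-- The subgroup of null-homotopic morphisms of 2-periodic complexes. -/
def nullHomotopic (C D : Cplx2 B) : AddSubgroup (C.Hom D) where
  carrier := {F | ∃ (h1 : C.X1 →ₗ[Bᵐᵒᵖ] D.X0) (h0 : C.X0 →ₗ[Bᵐᵒᵖ] D.X1),
    (∀ x, F.val.1 x = D.d0 (h1 x) + h0 (C.d1 x)) ∧
    (∀ x, F.val.2 x = D.d1 (h0 x) + h1 (C.d0 x))}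
  add_mem' := by
    rintro a b ⟨h1, h0, H1, H0⟩ ⟨g1, g0, G1, G0⟩
    refine ⟨h1 + g1, h0 + g0, fun x => ?_, fun x => ?_⟩
    · show a.val.1 x + b.val.1 x = _
      rw [H1 x, G1 x]; simp only [LinearMap.add_apply, map_add]; abel
    · show a.val.2 x + b.val.2 x = _
      rw [H0 x, G0 x]; simp only [LinearMap.add_apply, map_add]; abel
  zero_mem' := ⟨0, 0, fun x => by simp, fun x => by simp⟩
  neg_mem' := by
    rintro a ⟨h1, h0, H1, H0⟩
    refine ⟨-h1, -h0, fun x => ?_, fun x => ?_⟩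
    · show -(a.val.1 x) = _
      rw [H1 x]; simp only [LinearMap.neg_apply, map_neg]; abel
    · show -(a.val.2 x) = _
      rw [H0 x]; simp only [LinearMap.neg_apply, map_neg]; abel

/-- Hom groups in the homotopy category `K_2(mod B)` of 2-periodic complexes:
morphisms modulo null-homotopic ones. -/
abbrev HomK2 (C D : Cplx2 B) := C.Hom D ⧸ C.nullHomotopic D

end Cplx2

/-- A short exact sequence `0 → D → W → C → 0` of 2-periodic complexes;
these represent classes in `Ext¹_{C_2(mod B)}(C, D)`. -/
structure Cplx2Ext {B : Type} [Ring B] (C D : Cplx2 B) : Type 1 where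
  W : Cplx2 B
  i : D.Hom W
  p : W.Hom C
  inj1 : Injective i.val.1
  inj0 : Injective i.val.2
  surj1 : Surjective p.val.1
  surj0 : Surjective p.val.2
  ex1 : LinearMap.range i.val.1 = LinearMap.ker p.val.1
  ex0 : LinearMap.range i.val.2 = LinearMap.ker p.val.2

/-- Equivalence of short exact sequences of 2-periodic complexes: an isomorphism of
the middle terms restricting to the identity on both end terms. -/
def Cplx2ExtEquiv {B : Type} [Ring B] {C D : Cplx2 B} (E E' : Cplx2Ext C D) : Prop :=
  ∃ φ : E.W.Hom E'.W, Bijective φ.val.1 ∧ Bijective φ.val.2 ∧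
    φ.comp E.i = E'.i ∧ E'.p.comp φ = E.p

-- Mathlib's `codRestrictOfInjective` and its five lemma for modules assume a commutative ring,
-- which `Bᵐᵒᵖ` is not.
namespace LinearMap

variable {R : Type*} [Ring R] {A W W' C X : Type*} [AddCommGroup A] [AddCommGroup W]
  [AddCommGroup W'] [AddCommGroup C] [AddCommGroup X] [Module R A] [Module R W]
  [Module R W'] [Module R C] [Module R X]

noncomputable def factorThrough (i : A →ₗ[R] W) (hi : Injective i) (g : X →ₗ[R] W)
    (hg : ∀ x, g x ∈ range i) : X →ₗ[R] A :=
  (LinearEquiv.ofInjective i hi).symm.toLinearMap ∘ₗ g.codRestrict (range i) hg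

@[simp]
lemma apply_factorThrough (i : A →ₗ[R] W) (hi : Injective i) (g : X →ₗ[R] W)
    (hg : ∀ x, g x ∈ range i) (x : X) : i (factorThrough i hi g hg x) = g x :=
  congrArg Subtype.val ((LinearEquiv.ofInjective i hi).apply_symm_apply ⟨g x, hg x⟩)

lemma bijective_of_short_five {i : A →ₗ[R] W} {p : W →ₗ[R] C} {i' : A →ₗ[R] W'}
    {p' : W' →ₗ[R] C} (φ : W →ₗ[R] W') (hi' : Injective i') (hp : Surjective p)
    (hex : ker p ≤ range i) (hex' : ker p' ≤ range i')
    (hφi : ∀ a, φ (i a) = i' a) (hφp : ∀ w, p' (φ w) = p w) : Bijective φ := by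
  refine ⟨(injective_iff_map_eq_zero φ).mpr fun w hw => ?_, fun w' => ?_⟩
  · obtain ⟨a, rfl⟩ := hex (mem_ker.mpr (by rw [← hφp, hw, map_zero]))
    rw [hφi] at hw
    rw [hi' (hw.trans (map_zero i').symm), map_zero]
  · obtain ⟨w, hw⟩ := hp (p' w')
    obtain ⟨a, ha⟩ := hex' (mem_ker.mpr (by rw [map_sub, hφp, hw, sub_self] :
      p' (w' - φ w) = 0))
    exact ⟨w + i a, by rw [map_add, hφi, ha, add_sub_cancel]⟩

end LinearMap

namespace Cplx2

variable {B : Type} [Ring B] {M N : Cplx2 B}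

lemma Hom.ext {f g : N.Hom M} (h1 : ∀ x, f.val.1 x = g.val.1 x)
    (h0 : ∀ x, f.val.2 x = g.val.2 x) : f = g :=
  Subtype.ext (Prod.ext (LinearMap.ext h1) (LinearMap.ext h0))

/-- The components of `f : N → M*`, typed with codomains in `M` rather than `M*`. -/
def Hom.ofShift1 (f : N.Hom M.shift) : N.X1 →ₗ[Bᵐᵒᵖ] M.X0 := f.val.1

def Hom.ofShift0 (f : N.Hom M.shift) : N.X0 →ₗ[Bᵐᵒᵖ] M.X1 := f.val.2

def Hom.mkShift (g1 : N.X1 →ₗ[Bᵐᵒᵖ] M.X0) (g0 : N.X0 →ₗ[Bᵐᵒᵖ] M.X1)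
    (h1 : ∀ x, M.d0 (g1 x) = -g0 (N.d1 x)) (h0 : ∀ x, M.d1 (g0 x) = -g1 (N.d0 x)) :
    N.Hom M.shift :=
  ⟨(g1, g0), fun x => neg_eq_iff_eq_neg.mpr (h1 x), fun x => neg_eq_iff_eq_neg.mpr (h0 x)⟩

lemma Hom.ofShift_comm1 (f : N.Hom M.shift) (x : N.X1) :
    M.d0 (f.ofShift1 x) = -f.ofShift0 (N.d1 x) :=
  neg_eq_iff_eq_neg.mp (f.prop.1 x)

lemma Hom.ofShift_comm0 (f : N.Hom M.shift) (x : N.X0) :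
    M.d1 (f.ofShift0 x) = -f.ofShift1 (N.d0 x) :=
  neg_eq_iff_eq_neg.mp (f.prop.2 x)

lemma Hom.ofShift_ext {f g : N.Hom M.shift} (h1 : ∀ x, f.ofShift1 x = g.ofShift1 x)
    (h0 : ∀ x, f.ofShift0 x = g.ofShift0 x) : f = g :=
  Hom.ext h1 h0

@[simp]
lemma Hom.ofShift1_sub (f g : N.Hom M.shift) (x : N.X1) :
    (f - g).ofShift1 x = f.ofShift1 x - g.ofShift1 x := rfl

@[simp]
lemma Hom.ofShift0_sub (f g : N.Hom M.shift) (x : N.X0) :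
    (f - g).ofShift0 x = f.ofShift0 x - g.ofShift0 x := rfl

lemma mem_nullHomotopic_shift_iff {F : N.Hom M.shift} :
    F ∈ N.nullHomotopic M.shift ↔ ∃ (h1 : N.X1 →ₗ[Bᵐᵒᵖ] M.X1) (h0 : N.X0 →ₗ[Bᵐᵒᵖ] M.X0),
      (∀ x, F.ofShift1 x = h0 (N.d1 x) - M.d1 (h1 x)) ∧
      (∀ x, F.ofShift0 x = h1 (N.d0 x) - M.d0 (h0 x)) := by
  simp only [sub_eq_neg_add]
  rfl

def cone (f : N.Hom M.shift) : Cplx2 B where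
  X1 := ModuleCat.of Bᵐᵒᵖ (M.X1 × N.X1)
  X0 := ModuleCat.of Bᵐᵒᵖ (M.X0 × N.X0)
  d1 := (M.d1.coprod f.ofShift1).prod (N.d1 ∘ₗ LinearMap.snd _ _ _)
  d0 := (M.d0.coprod f.ofShift0).prod (N.d0 ∘ₗ LinearMap.snd _ _ _)
  h01 x := Prod.ext (show M.d0 (M.d1 x.1 + f.ofShift1 x.2) + f.ofShift0 (N.d1 x.2) = 0 by
    rw [map_add, M.h01, f.ofShift_comm1, zero_add, neg_add_cancel]) (N.h01 x.2)
  h10 x := Prod.ext (show M.d1 (M.d0 x.1 + f.ofShift0 x.2) + f.ofShift1 (N.d0 x.2) = 0 by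
    rw [map_add, M.h10, f.ofShift_comm0, zero_add, neg_add_cancel]) (N.h10 x.2)

def coneExt (f : N.Hom M.shift) : Cplx2Ext N M where
  W := cone f
  i := ⟨(LinearMap.inl _ _ _, LinearMap.inl _ _ _),
    ⟨fun x => show (M.d1 x + f.ofShift1 0, N.d1 0) = (M.d1 x, 0) by simp,
     fun x => show (M.d0 x + f.ofShift0 0, N.d0 0) = (M.d0 x, 0) by simp⟩⟩
  p := ⟨(LinearMap.snd _ _ _, LinearMap.snd _ _ _), ⟨fun _ => rfl, fun _ => rfl⟩⟩
  inj1 := LinearMap.inl_injective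
  inj0 := LinearMap.inl_injective
  surj1 := LinearMap.snd_surjective
  surj0 := LinearMap.snd_surjective
  ex1 := LinearMap.range_inl _ _ _
  ex0 := LinearMap.range_inl _ _ _

end Cplx2

namespace Cplx2Ext

open Cplx2

variable {B : Type} [Ring B] {M N : Cplx2 B} (E : Cplx2Ext N M) {X : Type*} [AddCommGroup X]
  [Module Bᵐᵒᵖ X]

lemma p_i1 (x : M.X1) : E.p.val.1 (E.i.val.1 x) = 0 :=
  LinearMap.mem_ker.mp (E.ex1 ▸ LinearMap.mem_range_self _ x)

lemma p_i0 (x : M.X0) : E.p.val.2 (E.i.val.2 x) = 0 :=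
  LinearMap.mem_ker.mp (E.ex0 ▸ LinearMap.mem_range_self _ x)

noncomputable def lift1 (g : X →ₗ[Bᵐᵒᵖ] E.W.X1) (hg : ∀ x, E.p.val.1 (g x) = 0) :
    X →ₗ[Bᵐᵒᵖ] M.X1 :=
  LinearMap.factorThrough _ E.inj1 g fun x => E.ex1 ▸ hg x

noncomputable def lift0 (g : X →ₗ[Bᵐᵒᵖ] E.W.X0) (hg : ∀ x, E.p.val.2 (g x) = 0) :
    X →ₗ[Bᵐᵒᵖ] M.X0 :=
  LinearMap.factorThrough _ E.inj0 g fun x => E.ex0 ▸ hg x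

@[simp]
lemma i_lift1 (g : X →ₗ[Bᵐᵒᵖ] E.W.X1) (hg : ∀ x, E.p.val.1 (g x) = 0) (x : X) :
    E.i.val.1 (E.lift1 g hg x) = g x :=
  LinearMap.apply_factorThrough _ _ _ _ x

@[simp]
lemma i_lift0 (g : X →ₗ[Bᵐᵒᵖ] E.W.X0) (hg : ∀ x, E.p.val.2 (g x) = 0) (x : X) :
    E.i.val.2 (E.lift0 g hg x) = g x :=
  LinearMap.apply_factorThrough _ _ _ _ x

/-- A splitting of `E` in each degree separately, ignoring the differentials. -/
structure Splitting where
  s1 : N.X1 →ₗ[Bᵐᵒᵖ] E.W.X1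
  s0 : N.X0 →ₗ[Bᵐᵒᵖ] E.W.X0
  p_s1 : ∀ x, E.p.val.1 (s1 x) = x
  p_s0 : ∀ x, E.p.val.2 (s0 x) = x

namespace Splitting

variable {E}

/-- The off-diagonal part of the differential of `W ≅ M ⊕ N` (degreewise) is a morphism
`N → M*`. -/
noncomputable def shiftHom (σ : E.Splitting) : N.Hom M.shift :=
  Hom.mkShift
    (E.lift0 (E.W.d1 ∘ₗ σ.s1 - σ.s0 ∘ₗ N.d1) fun x => by
      simp [← E.p.prop.1, σ.p_s1, σ.p_s0])
    (E.lift1 (E.W.d0 ∘ₗ σ.s0 - σ.s1 ∘ₗ N.d0) fun x => by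
      simp [← E.p.prop.2, σ.p_s1, σ.p_s0])
    (fun x => E.inj1 <| by simp [← E.i.prop.2, E.W.h01, N.h01])
    (fun x => E.inj0 <| by simp [← E.i.prop.1, E.W.h10, N.h10])

@[simp]
lemma i_shiftHom1 (σ : E.Splitting) (x : N.X1) :
    E.i.val.2 (σ.shiftHom.ofShift1 x) = E.W.d1 (σ.s1 x) - σ.s0 (N.d1 x) := by
  simp [shiftHom, Hom.mkShift, Hom.ofShift1]

@[simp]
lemma i_shiftHom0 (σ : E.Splitting) (x : N.X0) :
    E.i.val.1 (σ.shiftHom.ofShift0 x) = E.W.d0 (σ.s0 x) - σ.s1 (N.d0 x) := by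
  simp [shiftHom, Hom.mkShift, Hom.ofShift0]

lemma shiftHom_sub_mem_nullHomotopic (σ τ : E.Splitting) :
    τ.shiftHom - σ.shiftHom ∈ N.nullHomotopic M.shift := by
  refine mem_nullHomotopic_shift_iff.mpr
    ⟨E.lift1 (σ.s1 - τ.s1) fun x => by simp [τ.p_s1, σ.p_s1],
      E.lift0 (σ.s0 - τ.s0) fun x => by simp [τ.p_s0, σ.p_s0],
      fun x => E.inj0 ?_, fun x => E.inj1 ?_⟩
  · simp [← E.i.prop.1]
    abel
  · simp [← E.i.prop.2]
    abel

lemma nonempty_of_proj (hN : N.Proj) : Nonempty E.Splitting := by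
  obtain ⟨s1, hs1⟩ := Module.projective_lifting_property (h := hN.1) E.p.val.1 .id E.surj1
  obtain ⟨s0, hs0⟩ := Module.projective_lifting_property (h := hN.2) E.p.val.2 .id E.surj0
  exact ⟨⟨s1, s0, LinearMap.congr_fun hs1, LinearMap.congr_fun hs0⟩⟩

def map (σ : E.Splitting) {E' : Cplx2Ext N M} (φ : E.W.Hom E'.W) (hφ : E'.p.comp φ = E.p) :
    E'.Splitting where
  s1 := φ.val.1 ∘ₗ σ.s1
  s0 := φ.val.2 ∘ₗ σ.s0
  p_s1 x := (congrArg (fun g => g.val.1 (σ.s1 x)) hφ).trans (σ.p_s1 x)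
  p_s0 x := (congrArg (fun g => g.val.2 (σ.s0 x)) hφ).trans (σ.p_s0 x)

lemma shiftHom_map (σ : E.Splitting) {E' : Cplx2Ext N M} (φ : E.W.Hom E'.W)
    (hφi : φ.comp E.i = E'.i) (hφp : E'.p.comp φ = E.p) :
    (σ.map φ hφp).shiftHom = σ.shiftHom := by
  have hi1 (m : M.X1) : E'.i.val.1 m = φ.val.1 (E.i.val.1 m) := by rw [← hφi]; rfl
  have hi0 (m : M.X0) : E'.i.val.2 m = φ.val.2 (E.i.val.2 m) := by rw [← hφi]; rfl
  refine Hom.ofShift_ext (fun x => E'.inj0 ?_) (fun x => E'.inj1 ?_)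
  · rw [i_shiftHom1, hi0, i_shiftHom1, map_sub]
    simp [map, φ.prop.1]
  · rw [i_shiftHom0, hi1, i_shiftHom0, map_sub]
    simp [map, φ.prop.2]

end Splitting

end Cplx2Ext

lemma Cplx2ExtEquiv.of_hom {B : Type} [Ring B] {M N : Cplx2 B} {E E' : Cplx2Ext N M}
    (φ : E.W.Hom E'.W) (hφi : φ.comp E.i = E'.i) (hφp : E'.p.comp φ = E.p) :
    Cplx2ExtEquiv E E' :=
  ⟨φ,
    LinearMap.bijective_of_short_five φ.val.1 E'.inj1 E.surj1 E.ex1.ge E'.ex1.ge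
      (fun a => congrArg (fun g => g.val.1 a) hφi) (fun w => congrArg (fun g => g.val.1 w) hφp),
    LinearMap.bijective_of_short_five φ.val.2 E'.inj0 E.surj0 E.ex0.ge E'.ex0.ge
      (fun a => congrArg (fun g => g.val.2 a) hφi) (fun w => congrArg (fun g => g.val.2 w) hφp),
    hφi, hφp⟩

namespace Cplx2

variable {B : Type} [Ring B] {M N : Cplx2 B}

def coneSplitting (f : N.Hom M.shift) : (coneExt f).Splitting :=
  ⟨LinearMap.inr _ _ _, LinearMap.inr _ _ _, fun _ => rfl, fun _ => rfl⟩

lemma shiftHom_coneSplitting (f : N.Hom M.shift) : (coneSplitting f).shiftHom = f := by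
  refine Hom.ofShift_ext (fun x => (coneExt f).inj0 ?_) (fun x => (coneExt f).inj1 ?_)
  · rw [Cplx2Ext.Splitting.i_shiftHom1]
    show (M.d1 0 + f.ofShift1 x, N.d1 x) - (0, N.d1 x) = (f.ofShift1 x, 0)
    rw [map_zero, zero_add]
    exact Prod.ext (sub_zero _) (sub_self _)
  · rw [Cplx2Ext.Splitting.i_shiftHom0]
    show (M.d0 0 + f.ofShift0 x, N.d0 x) - (0, N.d0 x) = (f.ofShift0 x, 0)
    rw [map_zero, zero_add]
    exact Prod.ext (sub_zero _) (sub_self _)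

lemma coneExt_equiv_of_sub_mem {f g : N.Hom M.shift} (hfg : g - f ∈ N.nullHomotopic M.shift) :
    Cplx2ExtEquiv (coneExt f) (coneExt g) := by
  obtain ⟨h1, h0, H1, H0⟩ := mem_nullHomotopic_shift_iff.mp hfg
  have H1' (x : N.X1) : g.ofShift1 x = f.ofShift1 x + (h0 (N.d1 x) - M.d1 (h1 x)) :=
    eq_add_of_sub_eq' (H1 x)
  have H0' (x : N.X0) : g.ofShift0 x = f.ofShift0 x + (h1 (N.d0 x) - M.d0 (h0 x)) :=
    eq_add_of_sub_eq' (H0 x)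
  refine Cplx2ExtEquiv.of_hom
    ⟨((LinearMap.fst _ _ _ + h1 ∘ₗ LinearMap.snd _ _ _).prod (LinearMap.snd _ _ _),
      (LinearMap.fst _ _ _ + h0 ∘ₗ LinearMap.snd _ _ _).prod (LinearMap.snd _ _ _)),
      fun x => Prod.ext ?_ rfl, fun x => Prod.ext ?_ rfl⟩ ?_ rfl
  · show M.d1 (x.1 + h1 x.2) + g.ofShift1 x.2 = M.d1 x.1 + f.ofShift1 x.2 + h0 (N.d1 x.2)
    rw [map_add, H1']
    abel
  · show M.d0 (x.1 + h0 x.2) + g.ofShift0 x.2 = M.d0 x.1 + f.ofShift0 x.2 + h1 (N.d0 x.2)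
    rw [map_add, H0']
    abel
  · exact Hom.ext (fun m => Prod.ext (show m + h1 0 = m by simp) rfl)
      (fun m => Prod.ext (show m + h0 0 = m by simp) rfl)

lemma coneExt_shiftHom_equiv {E : Cplx2Ext N M} (σ : E.Splitting) :
    Cplx2ExtEquiv (coneExt σ.shiftHom) E := by
  refine Cplx2ExtEquiv.of_hom
    ⟨(E.i.val.1.coprod σ.s1, E.i.val.2.coprod σ.s0), fun x => ?_, fun x => ?_⟩
    (Hom.ext (fun m => show E.i.val.1 m + σ.s1 0 = _ by simp)
      (fun m => show E.i.val.2 m + σ.s0 0 = _ by simp))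
    (Hom.ext (fun x => show E.p.val.1 (E.i.val.1 x.1 + σ.s1 x.2) = x.2 by
        rw [map_add, E.p_i1, σ.p_s1, zero_add])
      (fun x => show E.p.val.2 (E.i.val.2 x.1 + σ.s0 x.2) = x.2 by
        rw [map_add, E.p_i0, σ.p_s0, zero_add]))
  · show E.W.d1 (E.i.val.1 x.1 + σ.s1 x.2)
      = E.i.val.2 (M.d1 x.1 + σ.shiftHom.ofShift1 x.2) + σ.s0 (N.d1 x.2)
    rw [map_add, map_add, E.i.prop.1, Cplx2Ext.Splitting.i_shiftHom1]
    abel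
  · show E.W.d0 (E.i.val.2 x.1 + σ.s0 x.2)
      = E.i.val.1 (M.d0 x.1 + σ.shiftHom.ofShift0 x.2) + σ.s1 (N.d0 x.2)
    rw [map_add, map_add, E.i.prop.2, Cplx2Ext.Splitting.i_shiftHom0]
    abel

noncomputable def extClass (hN : N.Proj) (E : Cplx2Ext N M) : N.HomK2 M.shift :=
  QuotientAddGroup.mk (Classical.choice (Cplx2Ext.Splitting.nonempty_of_proj (E := E) hN)).shiftHom

lemma extClass_eq (hN : N.Proj) {E : Cplx2Ext N M} (σ : E.Splitting) :
    extClass hN E = QuotientAddGroup.mk σ.shiftHom :=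
  QuotientAddGroup.eq.mpr (neg_add_eq_sub _ σ.shiftHom ▸
    Cplx2Ext.Splitting.shiftHom_sub_mem_nullHomotopic _ σ)

lemma extClass_congr (hN : N.Proj) {E E' : Cplx2Ext N M} (h : Cplx2ExtEquiv E E') :
    extClass hN E = extClass hN E' := by
  obtain ⟨φ, -, -, hφi, hφp⟩ := h
  let σ := Classical.choice (Cplx2Ext.Splitting.nonempty_of_proj (E := E) hN)
  rw [extClass_eq hN (σ.map φ hφp), σ.shiftHom_map φ hφi hφp]
  rfl

noncomputable def extEquivHomK2Shift (hN : N.Proj) :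
    Quot (Cplx2ExtEquiv (C := N) (D := M)) ≃ N.HomK2 M.shift where
  toFun := Quot.lift (extClass hN) fun _ _ => extClass_congr hN
  invFun := Quotient.lift (fun f => Quot.mk _ (coneExt f)) fun f g hfg =>
    Quot.sound (coneExt_equiv_of_sub_mem (by
      rw [← neg_add_eq_sub]
      exact QuotientAddGroup.leftRel_apply.mp hfg))
  left_inv := Quot.ind fun E => Quot.sound (coneExt_shiftHom_equiv _)
  right_inv := Quotient.ind fun f =>
    (extClass_eq hN (coneSplitting f)).trans (congrArg _ (shiftHom_coneSplitting f))

end Cplx2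

theorem ext1_iso_hom_homotopy_shift_general
    (B : Type) [Ring B]
    (M N : Cplx2 B) (hNp : N.Proj) :
    Nonempty (Quot (Cplx2ExtEquiv (C := N) (D := M)) ≃ Cplx2.HomK2 N M.shift) :=
  ⟨Cplx2.extEquivHomK2Shift hNp⟩

/-- For `B` of finite global dimension and 2-periodic complexes
`M•`, `N•` of finite-dimensional projective right `B`-modules there is an
isomorphism `Ext¹_{C_2(mod B)}(N•, M•) ≅ Hom_{K_2(mod B)}(N•, M•*)`, where `Ext¹`
is realized by equivalence classes of short exact sequences of 2-periodic
complexes and the right-hand side is the hom group in the homotopy category. -/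
theorem ext1_iso_hom_homotopy_shift
    (k : Type) [Field k] [Fintype k]
    (B : Type) [Ring B] [Algebra k B] [FiniteDimensional k B]
    (hgldim : ∃ n, GlobalDimLE B n)
    (M N : Cplx2 B) (hMp : M.Proj) (hNp : N.Proj) (hMf : M.FinDim) (hNf : N.FinDim) :
    Nonempty (Quot (Cplx2ExtEquiv (C := N) (D := M)) ≃ Cplx2.HomK2 N M.shift) :=
  ext1_iso_hom_homotopy_shift_general B M N hNp
end

section
/- Let B be a finite-dimensional algebra over k = F_q of global dimension at most 2, let B1, B2 be finite-dimensional right B-modules with associated 2-periodic complexes C_{B1}, C_{B2} built from minimal projective resolutions, and let M•, N• be acyclic 2-periodic complexes of finite-dimensional projective B-modules. If M• ⊕ C_{B1} ≅ N• ⊕ C_{B2} in C_2(mod B), then B1 ≅ B2 as B-modules. -/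
/-!
`H_0` is invariant under isomorphism of 2-periodic complexes and vanishes on acyclic summands,
so `H_0(M• ⊕ C_{A1}) ≅ H_0(C_{A1})` and likewise for `N•`. For the complex `C_A` of a resolution
`0 → P2 → P1 → P0 → A → 0` the degree-`0` cycles are `P0 ⊕ ker a2 = P0 ⊕ 0` as `a2` is injective, so
`H_0(C_A) = P0 / im a1 ≅ A`, and the isomorphism of the sums gives `A1 ≅ A2`.
-/

open Function

open LinearMap

namespace Cplx2

variable {B : Type} [Ring B]

lemma nonempty_H0_equiv_of_surjective {C : Cplx2 B} {A : Type} [AddCommGroup A] [Module Bᵐᵒᵖ A]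
    (φ : ker C.d0 →ₗ[Bᵐᵒᵖ] A) (hφ : Surjective φ)
    (hker : ∀ x, φ x = 0 ↔ (x : C.X0) ∈ range C.d1) :
    Nonempty (C.H0 ≃ₗ[Bᵐᵒᵖ] A) :=
  ⟨(Submodule.quotEquivOfEq _ _ (by ext x; exact (hker x).symm)).trans
    (φ.quotKerEquivOfSurjective hφ)⟩

lemma Iso.nonempty_H0_equiv {C D : Cplx2 B} (h : C.Iso D) : Nonempty (C.H0 ≃ₗ[Bᵐᵒᵖ] D.H0) := by
  obtain ⟨⟨⟨f1, f0⟩, hd1, hd0⟩, hf1, hf0⟩ := h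
  have f0_mem_ker : ∀ x, f0 x ∈ ker D.d0 ↔ x ∈ ker C.d0 := fun x => by
    simp only [mem_ker, hd0 x]
    exact hf1.injective.eq_iff' (map_zero f1)
  have f0_mem_range : ∀ x, f0 x ∈ range D.d1 ↔ x ∈ range C.d1 := fun x => by
    simp only [mem_range]
    constructor
    · rintro ⟨y, hy⟩
      obtain ⟨y, rfl⟩ := hf1.surjective y
      exact ⟨y, hf0.injective (by rw [← hd1, hy])⟩
    · rintro ⟨y, rfl⟩
      exact ⟨f1 y, hd1 y⟩
  refine nonempty_H0_equiv_of_surjective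
    (Submodule.mkQ _ ∘ₗ f0.restrict fun x => (f0_mem_ker x).2) ?_ ?_
  · intro z
    obtain ⟨⟨w, hw⟩, rfl⟩ := Submodule.Quotient.mk_surjective _ z
    obtain ⟨x, rfl⟩ := hf0.surjective w
    exact ⟨⟨x, (f0_mem_ker x).1 hw⟩, rfl⟩
  · intro x
    exact (Submodule.Quotient.mk_eq_zero _).trans (f0_mem_range x)

lemma nonempty_H0_dsum_equiv_of_acyclic {C E : Cplx2 B} (hC : C.Acyclic) :
    Nonempty ((C.dsum E).H0 ≃ₗ[Bᵐᵒᵖ] E.H0) := by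
  have mem_ker (x : C.X0 × E.X0) : x ∈ ker (C.dsum E).d0 ↔ x.1 ∈ ker C.d0 ∧ x.2 ∈ ker E.d0 := by
    change x ∈ ker (C.d0.prodMap E.d0) ↔ _
    rw [ker_prodMap, Submodule.mem_prod]
  refine nonempty_H0_equiv_of_surjective
    (Submodule.mkQ _ ∘ₗ (snd _ C.X0 E.X0).restrict fun x hx => ((mem_ker x).1 hx).2) ?_ ?_
  · intro z
    obtain ⟨⟨w, hw⟩, rfl⟩ := Submodule.Quotient.mk_surjective _ z
    exact ⟨⟨(0, w), (mem_ker _).2 ⟨zero_mem _, hw⟩⟩, rfl⟩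
  · rintro ⟨⟨u, v⟩, huv⟩
    have hu : u ∈ range C.d1 := hC.1 ▸ ((mem_ker _).1 huv).1
    change (Submodule.Quotient.mk ⟨v, _⟩ : E.H0) = 0 ↔ (u, v) ∈ range (C.d1.prodMap E.d1)
    rw [Submodule.Quotient.mk_eq_zero, range_prodMap, Submodule.mem_prod]
    exact (and_iff_right hu).symm

end Cplx2

lemma nonempty_H0_CA_equiv {B A P0 P1 P2 : Type} [Ring B] [AddCommGroup A] [Module Bᵐᵒᵖ A]
    [AddCommGroup P0] [Module Bᵐᵒᵖ P0] [AddCommGroup P1] [Module Bᵐᵒᵖ P1]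
    [AddCommGroup P2] [Module Bᵐᵒᵖ P2]
    (a0 : P0 →ₗ[Bᵐᵒᵖ] A) (a1 : P1 →ₗ[Bᵐᵒᵖ] P0) (a2 : P2 →ₗ[Bᵐᵒᵖ] P1)
    (hinj : Injective a2) (hex1 : range a1 = ker a0) (hsurj : Surjective a0)
    (hc : ∀ x, a1 (a2 x) = 0) :
    Nonempty ((CA a1 a2 hc).H0 ≃ₗ[Bᵐᵒᵖ] A) := by
  have mem_ker (x : P0 × P2) : x ∈ ker (CA a1 a2 hc).d0 ↔ x.2 = 0 := by
    change a2 x.2 = 0 ↔ _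
    exact map_eq_zero_iff a2 hinj
  refine Cplx2.nonempty_H0_equiv_of_surjective (a0 ∘ₗ fst _ P0 P2 ∘ₗ Submodule.subtype _) ?_ ?_
  · intro a
    obtain ⟨u, rfl⟩ := hsurj a
    exact ⟨⟨(u, 0), (mem_ker _).2 rfl⟩, rfl⟩
  · rintro ⟨⟨u, v⟩, huv⟩
    obtain rfl : v = 0 := (mem_ker _).1 huv
    change a0 u = 0 ↔ ∃ y, (a1 y, (0 : P2)) = (u, 0)
    rw [← LinearMap.mem_ker, ← hex1]
    exact ⟨fun ⟨y, hy⟩ => ⟨y, by rw [hy]⟩, fun ⟨y, hy⟩ => ⟨y, congrArg Prod.fst hy⟩⟩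

theorem cancel_acyclic_summands_general
    (B : Type) [Ring B]
    (A1 P0 P1 P2 : Type)
    [AddCommGroup A1] [Module Bᵐᵒᵖ A1]
    [AddCommGroup P0] [Module Bᵐᵒᵖ P0]
    [AddCommGroup P1] [Module Bᵐᵒᵖ P1]
    [AddCommGroup P2] [Module Bᵐᵒᵖ P2]
    (a0 : P0 →ₗ[Bᵐᵒᵖ] A1) (a1 : P1 →ₗ[Bᵐᵒᵖ] P0) (a2 : P2 →ₗ[Bᵐᵒᵖ] P1)
    (hinj : Injective a2)
    (hex1 : LinearMap.range a1 = LinearMap.ker a0) (hsurj : Surjective a0)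
    (hc : ∀ x, a1 (a2 x) = 0)
    (A2 Q0 Q1 Q2 : Type)
    [AddCommGroup A2] [Module Bᵐᵒᵖ A2]
    [AddCommGroup Q0] [Module Bᵐᵒᵖ Q0]
    [AddCommGroup Q1] [Module Bᵐᵒᵖ Q1]
    [AddCommGroup Q2] [Module Bᵐᵒᵖ Q2]
    (b0 : Q0 →ₗ[Bᵐᵒᵖ] A2) (b1 : Q1 →ₗ[Bᵐᵒᵖ] Q0) (b2 : Q2 →ₗ[Bᵐᵒᵖ] Q1)
    (hinj' : Injective b2)
    (hex1' : LinearMap.range b1 = LinearMap.ker b0) (hsurj' : Surjective b0)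
    (hc' : ∀ x, b1 (b2 x) = 0)
    (M N : Cplx2 B) (hMa : M.Acyclic) (hNa : N.Acyclic)
    (hiso : Cplx2.Iso (M.dsum (CA a1 a2 hc)) (N.dsum (CA b1 b2 hc'))) :
    Nonempty (A1 ≃ₗ[Bᵐᵒᵖ] A2) := by
  obtain ⟨eA1⟩ := nonempty_H0_CA_equiv a0 a1 a2 hinj hex1 hsurj hc
  obtain ⟨eA2⟩ := nonempty_H0_CA_equiv b0 b1 b2 hinj' hex1' hsurj' hc'
  obtain ⟨eM⟩ := Cplx2.nonempty_H0_dsum_equiv_of_acyclic (E := CA a1 a2 hc) hMa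
  obtain ⟨eN⟩ := Cplx2.nonempty_H0_dsum_equiv_of_acyclic (E := CA b1 b2 hc') hNa
  obtain ⟨eIso⟩ := hiso.nonempty_H0_equiv
  exact ⟨eA1.symm ≪≫ₗ eM.symm ≪≫ₗ eIso ≪≫ₗ eN ≪≫ₗ eA2⟩

/-- If `M• ⊕ C_{B1} ≅ N• ⊕ C_{B2}` with `M•`, `N•` acyclic
2-periodic complexes of finite-dimensional projectives, then `B1 ≅ B2`. -/
theorem cancel_acyclic_summands
    (k : Type) [Field k] [Fintype k]
    (B : Type) [Ring B] [Algebra k B] [FiniteDimensional k B]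
    (hgldim : GlobalDimLE B 2)
    (A1 P0 P1 P2 : Type)
    [AddCommGroup A1] [Module Bᵐᵒᵖ A1] [Module.Finite Bᵐᵒᵖ A1]
    [AddCommGroup P0] [Module Bᵐᵒᵖ P0] [Module.Finite Bᵐᵒᵖ P0]
    [AddCommGroup P1] [Module Bᵐᵒᵖ P1] [Module.Finite Bᵐᵒᵖ P1]
    [AddCommGroup P2] [Module Bᵐᵒᵖ P2] [Module.Finite Bᵐᵒᵖ P2]
    (a0 : P0 →ₗ[Bᵐᵒᵖ] A1) (a1 : P1 →ₗ[Bᵐᵒᵖ] P0) (a2 : P2 →ₗ[Bᵐᵒᵖ] P1)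
    (hproj0 : Module.Projective Bᵐᵒᵖ P0) (hproj1 : Module.Projective Bᵐᵒᵖ P1)
    (hproj2 : Module.Projective Bᵐᵒᵖ P2)
    (hinj : Injective a2) (hex2 : LinearMap.range a2 = LinearMap.ker a1)
    (hex1 : LinearMap.range a1 = LinearMap.ker a0) (hsurj : Surjective a0)
    (hmin1 : Superfluous (LinearMap.range a1))
    (hmin2 : Superfluous (LinearMap.range a2))
    (hc : ∀ x, a1 (a2 x) = 0)
    (A2 Q0 Q1 Q2 : Type)
    [AddCommGroup A2] [Module Bᵐᵒᵖ A2] [Module.Finite Bᵐᵒᵖ A2]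
    [AddCommGroup Q0] [Module Bᵐᵒᵖ Q0] [Module.Finite Bᵐᵒᵖ Q0]
    [AddCommGroup Q1] [Module Bᵐᵒᵖ Q1] [Module.Finite Bᵐᵒᵖ Q1]
    [AddCommGroup Q2] [Module Bᵐᵒᵖ Q2] [Module.Finite Bᵐᵒᵖ Q2]
    (b0 : Q0 →ₗ[Bᵐᵒᵖ] A2) (b1 : Q1 →ₗ[Bᵐᵒᵖ] Q0) (b2 : Q2 →ₗ[Bᵐᵒᵖ] Q1)
    (hproj0' : Module.Projective Bᵐᵒᵖ Q0) (hproj1' : Module.Projective Bᵐᵒᵖ Q1)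
    (hproj2' : Module.Projective Bᵐᵒᵖ Q2)
    (hinj' : Injective b2) (hex2' : LinearMap.range b2 = LinearMap.ker b1)
    (hex1' : LinearMap.range b1 = LinearMap.ker b0) (hsurj' : Surjective b0)
    (hmin1' : Superfluous (LinearMap.range b1))
    (hmin2' : Superfluous (LinearMap.range b2))
    (hc' : ∀ x, b1 (b2 x) = 0)
    (M N : Cplx2 B) (hMp : M.Proj) (hMf : M.FinDim) (hMa : M.Acyclic)
    (hNp : N.Proj) (hNf : N.FinDim) (hNa : N.Acyclic)
    (hiso : Cplx2.Iso (M.dsum (CA a1 a2 hc)) (N.dsum (CA b1 b2 hc'))) :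
    Nonempty (A1 ≃ₗ[Bᵐᵒᵖ] A2) :=
  cancel_acyclic_summands_general B A1 P0 P1 P2 a0 a1 a2 hinj hex1 hsurj hc A2 Q0 Q1 Q2 b0 b1 b2
    hinj' hex1' hsurj' hc' M N hMa hNa hiso
end

section
/- Let B be a finite-dimensional algebra over k = F_q, P a finite-dimensional projective right B-module, and N• a 2-periodic complex of finite-dimensional projective right B-modules. Then every short exact sequence in C_2(mod B) of any of the forms 0 → N• → E• → K_P → 0, 0 → K_P → E• → N• → 0, 0 → N• → E• → K_P* → 0, or 0 → K_P* → E• → N• → 0 splits; equivalently, Ext^1_{C_2(mod B)}(K_P, N•) = Ext^1_{C_2(mod B)}(N•, K_P) = Ext^1_{C_2(mod B)}(K_P*, N•) = Ext^1_{C_2(mod B)}(N•, K_P*) = 0. -/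
open Function

/-- A short exact sequence of 2-periodic complexes splits if the projection
admits a section. -/
def Cplx2Ext.Splits {B : Type} [Ring B] {C D : Cplx2 B} (E : Cplx2Ext C D) : Prop :=
  ∃ s : C.Hom E.W, E.p.comp s = Cplx2.Hom.id C

/-! Since the right end term has projective components, the sequence splits componentwise.
For sections `t`, the defect `d t - t d` factors through the left end term as a cocycle `δ`,
and the sequence splits once `δ` is a coboundary. If the right end term is contractible via `h`,
write `δ = δ (d h + h d)`; if the left one is contractible via `H`, write `δ = (d H + H d) δ`.
The cocycle identity `d δ = - δ d` turns either into a coboundary. Both `K_P` and `K_P*` are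
contractible. -/

theorem LinearMap.exists_comp_eq_of_injective {R L M N : Type*} [Ring R]
    [AddCommGroup L] [AddCommGroup M] [AddCommGroup N] [Module R L] [Module R M] [Module R N]
    (i : M →ₗ[R] N) (hi : Injective i) (e : L →ₗ[R] N) (he : ∀ x, e x ∈ LinearMap.range i) :
    ∃ f : L →ₗ[R] M, i ∘ₗ f = e :=
  ⟨(LinearEquiv.ofInjective i hi).symm ∘ₗ e.codRestrict _ he, LinearMap.ext fun x =>
    congrArg Subtype.val ((LinearEquiv.ofInjective i hi).apply_symm_apply ⟨e x, he x⟩)⟩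

namespace Cplx2

variable {B : Type} [Ring B]

def Contractible (C : Cplx2 B) : Prop :=
  ∃ (h1 : C.X1 →ₗ[Bᵐᵒᵖ] C.X0) (h0 : C.X0 →ₗ[Bᵐᵒᵖ] C.X1),
    (∀ x, C.d0 (h1 x) + h0 (C.d1 x) = x) ∧ (∀ x, C.d1 (h0 x) + h1 (C.d0 x) = x)

end Cplx2

theorem contractible_KP {B : Type} [Ring B] (P : ModuleCat.{0} Bᵐᵒᵖ) : (KP P).Contractible :=
  ⟨0, LinearMap.id, zero_add, add_zero⟩

theorem contractible_KPs {B : Type} [Ring B] (P : ModuleCat.{0} Bᵐᵒᵖ) : (KPs P).Contractible :=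
  ⟨LinearMap.id, 0, add_zero, zero_add⟩

namespace Cplx2Ext

variable {B : Type} [Ring B] {C D : Cplx2 B} (E : Cplx2Ext C D)

theorem p_i_apply₁ (x : D.X1) : E.p.val.1 (E.i.val.1 x) = 0 := by
  rw [← LinearMap.mem_ker, ← E.ex1]
  exact ⟨x, rfl⟩

theorem p_i_apply₀ (x : D.X0) : E.p.val.2 (E.i.val.2 x) = 0 := by
  rw [← LinearMap.mem_ker, ← E.ex0]
  exact ⟨x, rfl⟩

theorem exists_sections (hCp : C.Proj) :
    ∃ (t1 : C.X1 →ₗ[Bᵐᵒᵖ] E.W.X1) (t0 : C.X0 →ₗ[Bᵐᵒᵖ] E.W.X0),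
      (∀ x, E.p.val.1 (t1 x) = x) ∧ (∀ x, E.p.val.2 (t0 x) = x) := by
  have := hCp.1
  have := hCp.2
  obtain ⟨t1, ht1⟩ := Module.projective_lifting_property E.p.val.1 LinearMap.id E.surj1
  obtain ⟨t0, ht0⟩ := Module.projective_lifting_property E.p.val.2 LinearMap.id E.surj0
  exact ⟨t1, t0, LinearMap.ext_iff.1 ht1, LinearMap.ext_iff.1 ht0⟩

variable {E} {t1 : C.X1 →ₗ[Bᵐᵒᵖ] E.W.X1} {t0 : C.X0 →ₗ[Bᵐᵒᵖ] E.W.X0}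

theorem exists_defect (ht1 : ∀ x, E.p.val.1 (t1 x) = x) (ht0 : ∀ x, E.p.val.2 (t0 x) = x) :
    ∃ (δ1 : C.X1 →ₗ[Bᵐᵒᵖ] D.X0) (δ0 : C.X0 →ₗ[Bᵐᵒᵖ] D.X1),
      (∀ x, E.i.val.2 (δ1 x) = E.W.d1 (t1 x) - t0 (C.d1 x)) ∧
      (∀ x, E.i.val.1 (δ0 x) = E.W.d0 (t0 x) - t1 (C.d0 x)) := by
  obtain ⟨δ1, hδ1⟩ := LinearMap.exists_comp_eq_of_injective E.i.val.2 E.inj0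
    (E.W.d1 ∘ₗ t1 - t0 ∘ₗ C.d1) fun x => by
      rw [E.ex0, LinearMap.mem_ker]
      simp [← E.p.prop.1, ht1, ht0]
  obtain ⟨δ0, hδ0⟩ := LinearMap.exists_comp_eq_of_injective E.i.val.1 E.inj1
    (E.W.d0 ∘ₗ t0 - t1 ∘ₗ C.d0) fun x => by
      rw [E.ex1, LinearMap.mem_ker]
      simp [← E.p.prop.2, ht1, ht0]
  exact ⟨δ1, δ0, LinearMap.congr_fun hδ1, LinearMap.congr_fun hδ0⟩

variable {δ1 : C.X1 →ₗ[Bᵐᵒᵖ] D.X0} {δ0 : C.X0 →ₗ[Bᵐᵒᵖ] D.X1}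

theorem defect_cocycle (hδ1 : ∀ x, E.i.val.2 (δ1 x) = E.W.d1 (t1 x) - t0 (C.d1 x))
    (hδ0 : ∀ x, E.i.val.1 (δ0 x) = E.W.d0 (t0 x) - t1 (C.d0 x)) :
    (∀ x, D.d0 (δ1 x) = -δ0 (C.d1 x)) ∧ (∀ x, D.d1 (δ0 x) = -δ1 (C.d0 x)) := by
  constructor <;> intro x
  · apply E.inj1
    rw [← E.i.prop.2, hδ1, map_neg, hδ0, map_sub, E.W.h01, C.h01, map_zero]
    abel
  · apply E.inj0
    rw [← E.i.prop.1, hδ0, map_neg, hδ1, map_sub, E.W.h10, C.h10, map_zero]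
    abel

theorem splits_of_defect_eq_coboundary (ht1 : ∀ x, E.p.val.1 (t1 x) = x)
    (ht0 : ∀ x, E.p.val.2 (t0 x) = x)
    (hδ1 : ∀ x, E.i.val.2 (δ1 x) = E.W.d1 (t1 x) - t0 (C.d1 x))
    (hδ0 : ∀ x, E.i.val.1 (δ0 x) = E.W.d0 (t0 x) - t1 (C.d0 x))
    (a : C.X1 →ₗ[Bᵐᵒᵖ] D.X1) (b : C.X0 →ₗ[Bᵐᵒᵖ] D.X0)
    (ha : ∀ x, δ1 x = b (C.d1 x) - D.d1 (a x)) (hb : ∀ x, δ0 x = a (C.d0 x) - D.d0 (b x)) :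
    E.Splits := by
  refine ⟨⟨(t1 + E.i.val.1 ∘ₗ a, t0 + E.i.val.2 ∘ₗ b), fun x => ?_, fun x => ?_⟩, ?_⟩
  · have h := hδ1 x
    rw [ha, map_sub] at h
    simp only [LinearMap.add_apply, LinearMap.comp_apply, map_add, E.i.prop.1]
    grind
  · have h := hδ0 x
    rw [hb, map_sub] at h
    simp only [LinearMap.add_apply, LinearMap.comp_apply, map_add, E.i.prop.2]
    grind
  · refine Subtype.ext (Prod.ext (LinearMap.ext fun x => ?_) (LinearMap.ext fun x => ?_))
    · change E.p.val.1 (t1 x + E.i.val.1 (a x)) = x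
      rw [map_add, ht1, p_i_apply₁, add_zero]
    · change E.p.val.2 (t0 x + E.i.val.2 (b x)) = x
      rw [map_add, ht0, p_i_apply₀, add_zero]

variable (E)

theorem splits_of_contractible_left (hCp : C.Proj) (hDc : D.Contractible) : E.Splits := by
  obtain ⟨t1, t0, ht1, ht0⟩ := E.exists_sections hCp
  obtain ⟨δ1, δ0, hδ1, hδ0⟩ := exists_defect ht1 ht0
  obtain ⟨hc1, hc0⟩ := defect_cocycle hδ1 hδ0
  obtain ⟨H1, H0, hH1, hH0⟩ := hDc
  refine splits_of_defect_eq_coboundary ht1 ht0 hδ1 hδ0 (-(H0 ∘ₗ δ1)) (-(H1 ∘ₗ δ0))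
    (fun x => ?_) (fun x => ?_)
  · simp only [LinearMap.neg_apply, LinearMap.comp_apply, map_neg]
    grind
  · simp only [LinearMap.neg_apply, LinearMap.comp_apply, map_neg]
    grind

theorem splits_of_contractible_right (hCp : C.Proj) (hCc : C.Contractible) : E.Splits := by
  obtain ⟨t1, t0, ht1, ht0⟩ := E.exists_sections hCp
  obtain ⟨δ1, δ0, hδ1, hδ0⟩ := exists_defect ht1 ht0
  obtain ⟨hc1, hc0⟩ := defect_cocycle hδ1 hδ0
  obtain ⟨h1, h0, hh1, hh0⟩ := hCc
  refine splits_of_defect_eq_coboundary ht1 ht0 hδ1 hδ0 (δ0 ∘ₗ h1) (δ1 ∘ₗ h0)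
    (fun x => ?_) (fun x => ?_)
  · simp only [LinearMap.comp_apply]
    grind
  · simp only [LinearMap.comp_apply]
    grind

end Cplx2Ext

theorem ses_with_KP_splits_general
    (B : Type) [Ring B]
    (P : ModuleCat.{0} Bᵐᵒᵖ) (hP : Module.Projective Bᵐᵒᵖ P)
    (N : Cplx2 B) (hNp : N.Proj) :
    (∀ E : Cplx2Ext (KP P) N, E.Splits) ∧
    (∀ E : Cplx2Ext N (KP P), E.Splits) ∧
    (∀ E : Cplx2Ext (KPs P) N, E.Splits) ∧
    (∀ E : Cplx2Ext N (KPs P), E.Splits) :=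
  ⟨fun E => E.splits_of_contractible_right ⟨hP, hP⟩ (contractible_KP P),
    fun E => E.splits_of_contractible_left hNp (contractible_KP P),
    fun E => E.splits_of_contractible_right ⟨hP, hP⟩ (contractible_KPs P),
    fun E => E.splits_of_contractible_left hNp (contractible_KPs P)⟩

/-- Every short exact sequence of 2-periodic complexes with one
end term `K_P` or `K_P*` (`P` projective) and the other end a complex of
finite-dimensional projectives splits; equivalently the corresponding `Ext¹`
groups vanish. -/
theorem ses_with_KP_splits
    (k : Type) [Field k] [Fintype k]
    (B : Type) [Ring B] [Algebra k B] [FiniteDimensional k B]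
    (P : ModuleCat.{0} Bᵐᵒᵖ) (hP : Module.Projective Bᵐᵒᵖ P)
    (hPf : Module.Finite Bᵐᵒᵖ P) (N : Cplx2 B) (hNp : N.Proj) (hNf : N.FinDim) :
    (∀ E : Cplx2Ext (KP P) N, E.Splits) ∧
    (∀ E : Cplx2Ext N (KP P), E.Splits) ∧
    (∀ E : Cplx2Ext (KPs P) N, E.Splits) ∧
    (∀ E : Cplx2Ext N (KPs P), E.Splits) :=
  ses_with_KP_splits_general B P hP N hNp
end
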